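/- arXiv:1909.13691 — 3 statements merged into one kernel-verified Lean document; each statement's English description precedes it below -/
import Mathlib

section
/- Let α be a real number with cos(α/2) ≠ 0, and set q₁ = tan(α/2) and q₂ = sin(α). Let A(q) denote the 2×2 real matrix [[1,0],[q,1]] and let B denote the 2×2 real matrix [[0,−1],[1,0]]. Then the matrix product A(q₁)·B⁻¹·A(q₂)·B·A(q₁) equals the 2D rotation matrix [[cos α, −sin α],[sin α, cos α]]. -/
/-!
Conjugating the lower shear `[[1,0],[q,1]]` by the quarter turn `B` gives the upper shear
`[[1,-q],[0,1]]`, so the product is the three-shear factorisation of a rotation: lower shear by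
`t`, upper shear by `-s`, lower shear by `t`. This is the rotation `[[c,-s],[s,c]]` as soon as
`t s = 1 - c` and `t (1 + c) = s`, the half-angle identities for `t = tan(α/2)`, `s = sin α`,
`c = cos α`.
-/

open Matrix

section Shear

variable {R : Type*} [CommRing R]

theorem inv_quarterTurn : (!![0, -1; 1, 0] : Matrix (Fin 2) (Fin 2) R)⁻¹ = !![0, 1; -1, 0] :=
  inv_eq_left_inv (by simp [one_fin_two])

theorem quarterTurn_inv_mul_lowerShear_mul_quarterTurn (q : R) :
    (!![0, -1; 1, 0] : Matrix (Fin 2) (Fin 2) R)⁻¹ * !![1, 0; q, 1] * !![0, -1; 1, 0] =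
      !![1, -q; 0, 1] := by
  rw [inv_quarterTurn]
  simp

theorem lowerShear_mul_upperShear_mul_lowerShear {t s c : R} (hts : t * s = 1 - c)
    (htc : t * (1 + c) = s) :
    (!![1, 0; t, 1] : Matrix (Fin 2) (Fin 2) R) * !![1, -s; 0, 1] * !![1, 0; t, 1] =
      !![c, -s; s, c] := by
  ext i j
  fin_cases i <;> fin_cases j <;> simp
  · linear_combination -hts
  · linear_combination htc - t * hts
  · linear_combination -hts

end Shear

namespace Real

theorem tan_mul_sin_two_mul {y : ℝ} (hy : cos y ≠ 0) :
    tan y * sin (2 * y) = 1 - cos (2 * y) := by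
  rw [tan_eq_sin_div_cos, sin_two_mul, cos_two_mul, ← sin_sq_add_cos_sq y]
  field_simp
  ring

theorem tan_mul_one_add_cos_two_mul {y : ℝ} (hy : cos y ≠ 0) :
    tan y * (1 + cos (2 * y)) = sin (2 * y) := by
  rw [tan_eq_sin_div_cos, sin_two_mul, cos_two_mul]
  field_simp
  ring

end Real

/-- With `q₁ = tan(α/2)`, `q₂ = sin α`, shear matrices `A q = [[1,0],[q,1]]`
and `B = [[0,-1],[1,0]]`, the product `A(q₁)·B⁻¹·A(q₂)·B·A(q₁)` is the rotation by `α`. -/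
theorem garcia_product_eq_rotation (α : ℝ) (h : Real.cos (α / 2) ≠ 0)
    (q₁ q₂ : ℝ) (hq₁ : q₁ = Real.tan (α / 2)) (hq₂ : q₂ = Real.sin α)
    (A : ℝ → Matrix (Fin 2) (Fin 2) ℝ)
    (hA : ∀ q, A q = !![1, 0; q, 1])
    (B : Matrix (Fin 2) (Fin 2) ℝ)
    (hB : B = !![0, -1; 1, 0]) :
    A q₁ * B⁻¹ * A q₂ * B * A q₁ =
      !![Real.cos α, -Real.sin α; Real.sin α, Real.cos α] := by
  have hts := Real.tan_mul_sin_two_mul h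
  have htc := Real.tan_mul_one_add_cos_two_mul h
  rw [mul_div_cancel₀ α two_ne_zero] at hts htc
  calc A q₁ * B⁻¹ * A q₂ * B * A q₁ = A q₁ * (B⁻¹ * A q₂ * B) * A q₁ := by
        simp only [Matrix.mul_assoc]
    _ = !![1, 0; q₁, 1] * !![1, -q₂; 0, 1] * !![1, 0; q₁, 1] := by
        rw [hA, hA, hB, quarterTurn_inv_mul_lowerShear_mul_quarterTurn]
    _ = _ := by
        rw [hq₁, hq₂]
        exact lowerShear_mul_upperShear_mul_lowerShear hts htc
end

section
/- Let N be a positive even integer and let ζ = exp(−πi/N). Then the quadratic Gauss-type sum S₀ = Σ_{m=0}^{N−1} ζ^{m²} satisfies |S₀|² = N; equivalently, σ = S₀/√N has unit modulus |σ| = 1. -/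
open Finset

private lemma gauss_shift_one (G : ℤ → ℂ) (N : ℕ) (hG : ∀ m : ℤ, G (m + N) = G m) :
    ∑ m ∈ Finset.range N, G ((m : ℤ) + 1) = ∑ m ∈ Finset.range N, G m := by
  have h1 : ∑ m ∈ Finset.range (N + 1), G m
      = ∑ m ∈ Finset.range N, G ((m : ℤ) + 1) + G 0 := by
    have := Finset.sum_range_succ' (fun m : ℕ => G m) N
    simpa [Nat.cast_add, Nat.cast_one] using this
  have h2 : ∑ m ∈ Finset.range (N + 1), G m
      = ∑ m ∈ Finset.range N, G m + G 0 := by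
    rw [Finset.sum_range_succ]
    have h3 : G (N : ℤ) = G 0 := by simpa using hG 0
    rw [h3]
  have := h1.symm.trans h2
  exact add_right_cancel this

private lemma gauss_shift_sum (G : ℤ → ℂ) (N : ℕ) (hG : ∀ m : ℤ, G (m + N) = G m) (c : ℕ) :
    ∑ m ∈ Finset.range N, G ((m : ℤ) + c) = ∑ m ∈ Finset.range N, G m := by
  induction c with
  | zero => simp
  | succ c ih =>
    have key := gauss_shift_one (fun x => G (x + c)) N (fun m => by
      simpa [add_right_comm] using hG (m + c))
    calc ∑ m ∈ Finset.range N, G ((m : ℤ) + (c + 1 : ℕ))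
        = ∑ m ∈ Finset.range N, G (((m : ℤ) + 1) + c) := by
          refine Finset.sum_congr rfl fun m _ => ?_
          congr 1; push_cast; ring
      _ = ∑ m ∈ Finset.range N, G ((m : ℤ) + c) := key
      _ = _ := ih

/-- For even positive `N` and `ζ = exp(−πi/N)`, the quadratic Gauss-type
sum `S₀ = Σ_{m=0}^{N−1} ζ^{m²}` satisfies `|S₀|² = N`; equivalently `σ = S₀/√N` has
unit modulus. -/
theorem gauss_sum_abs_sq (N : ℕ) (hN : 0 < N) (hNeven : Even N)
    (ζ : ℂ) (hζ : ζ = Complex.exp (-Real.pi * Complex.I / N))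
    (S₀ : ℂ) (hS₀ : S₀ = ∑ m : Fin N, ζ ^ ((m : ℕ) ^ 2)) :
    ‖S₀‖ ^ 2 = N ∧ ‖S₀ / Real.sqrt N‖ = 1 := by
  obtain ⟨t, ht⟩ := hNeven
  have hNC : (N : ℂ) ≠ 0 := Nat.cast_ne_zero.mpr hN.ne'
  have hζ0 : ζ ≠ 0 := by rw [hζ]; exact Complex.exp_ne_zero _
  -- ζ is a primitive 2N-th root of unity
  have hinv : ζ⁻¹ = Complex.exp (2 * Real.pi * Complex.I / (2 * N)) := by
    rw [hζ, ← Complex.exp_neg]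
    congr 1
    field_simp
  have hprim : IsPrimitiveRoot ζ (2 * N) := by
    have h0 := Complex.isPrimitiveRoot_exp (2 * N) (by positivity)
    rw [show ((2 * N : ℕ) : ℂ) = 2 * (N : ℂ) by push_cast; ring, ← hinv] at h0
    simpa using h0.inv
  have h2N : ζ ^ (2 * N) = 1 := hprim.pow_eq_one
  -- integer-power congruence mod 2N
  have hzpow : ∀ a b : ℤ, (2 * (N : ℤ)) ∣ (a - b) → ζ ^ a = ζ ^ b := by
    intro a b ⟨c, hc⟩
    have ha : a = b + (2 * (N : ℤ)) * c := by linarith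
    have h1 : ζ ^ ((2 * (N : ℤ)) * c) = 1 := by
      rw [zpow_mul]
      have : ζ ^ (2 * (N : ℤ)) = 1 := by
        rw [show (2 * (N : ℤ)) = ((2 * N : ℕ) : ℤ) by push_cast; ring, zpow_natCast, h2N]
      rw [this, one_zpow]
    rw [ha, zpow_add₀ hζ0, h1, mul_one]
  have hconjζ : (starRingEnd ℂ) ζ = ζ⁻¹ := by
    rw [hζ, ← Complex.exp_conj, ← Complex.exp_neg]
    congr 1
    simp [map_div₀, Complex.conj_I]
    ring
  have hS : S₀ = ∑ m ∈ Finset.range N, ζ ^ ((m : ℤ) ^ 2) := by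
    rw [hS₀, Fin.sum_univ_eq_sum_range (fun m => ζ ^ (m ^ 2)) N]
    refine Finset.sum_congr rfl fun m _ => ?_
    rw [← zpow_natCast]
    congr 1
  have hconjS : (starRingEnd ℂ) S₀ = ∑ n ∈ Finset.range N, ζ ^ (-((n : ℤ) ^ 2)) := by
    rw [hS, map_sum]
    refine Finset.sum_congr rfl fun n _ => ?_
    rw [map_zpow₀, hconjζ, inv_zpow, ← zpow_neg]
  -- the key computation
  have key : S₀ * (starRingEnd ℂ) S₀ = (N : ℂ) := by
    rw [hconjS, hS, Finset.sum_mul_sum]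
    have step1 : ∀ m n : ℕ, ζ ^ ((m : ℤ) ^ 2) * ζ ^ (-((n : ℤ) ^ 2))
        = ζ ^ ((m : ℤ) ^ 2 - (n : ℤ) ^ 2) := by
      intro m n
      rw [← zpow_add₀ hζ0, sub_eq_add_neg]
    calc ∑ m ∈ Finset.range N, ∑ n ∈ Finset.range N,
            ζ ^ ((m : ℤ) ^ 2) * ζ ^ (-((n : ℤ) ^ 2))
        = ∑ n ∈ Finset.range N, ∑ m ∈ Finset.range N,
            ζ ^ ((m : ℤ) ^ 2 - (n : ℤ) ^ 2) := by
          rw [Finset.sum_comm]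
          exact Finset.sum_congr rfl fun n _ => Finset.sum_congr rfl fun m _ => step1 m n
      _ = ∑ n ∈ Finset.range N, ∑ k ∈ Finset.range N,
            ζ ^ ((k : ℤ) ^ 2 + 2 * k * n) := by
          refine Finset.sum_congr rfl fun n _ => ?_
          have hper : ∀ m : ℤ, ζ ^ ((m + N) ^ 2 - (n : ℤ) ^ 2) = ζ ^ (m ^ 2 - (n : ℤ) ^ 2) := by
            intro m
            refine hzpow _ _ ⟨m + t, ?_⟩
            have hNt : (N : ℤ) = 2 * t := by exact_mod_cast (by omega : N = 2 * t)
            rw [hNt]; ring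
          have := gauss_shift_sum (fun x => ζ ^ (x ^ 2 - (n : ℤ) ^ 2)) N hper n
          rw [← this]
          refine Finset.sum_congr rfl fun k _ => ?_
          congr 1; ring
      _ = ∑ k ∈ Finset.range N, ζ ^ (k ^ 2) * ∑ n ∈ Finset.range N, (ζ ^ (2 * k)) ^ n := by
          rw [Finset.sum_comm]
          refine Finset.sum_congr rfl fun k _ => ?_
          rw [Finset.mul_sum]
          refine Finset.sum_congr rfl fun n _ => ?_
          rw [← pow_mul, ← pow_add, ← zpow_natCast]
          congr 1
      _ = (N : ℂ) := by
          rw [Finset.sum_eq_single_of_mem 0 (Finset.mem_range.mpr hN)]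
          · simp
          · intro k hk hk0
            have hkN : k < N := Finset.mem_range.mp hk
            have hne1 : ζ ^ (2 * k) ≠ 1 := by
              intro h
              have hdd := (hprim.pow_eq_one_iff_dvd (2 * k)).mp h
              have hNk : N ∣ k := (Nat.mul_dvd_mul_iff_left (by norm_num : 0 < 2)).mp hdd
              have := Nat.le_of_dvd (Nat.pos_of_ne_zero hk0) hNk
              omega
            rw [geom_sum_eq hne1]
            have hnum : (ζ ^ (2 * k)) ^ N = 1 := by
              rw [← pow_mul, show 2 * k * N = 2 * N * k by ring, pow_mul, h2N, one_pow]
            rw [hnum, sub_self, zero_div, mul_zero]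
  -- conclude
  have hnsq : Complex.normSq S₀ = N := by
    have h := Complex.mul_conj S₀
    have : (Complex.normSq S₀ : ℂ) = (N : ℂ) := by rw [← h]; exact key
    exact_mod_cast this
  have habs2 : ‖S₀‖ ^ 2 = N := by rw [Complex.sq_norm]; exact hnsq
  refine ⟨habs2, ?_⟩
  have habs : ‖S₀‖ = Real.sqrt N := by
    rw [← Real.sqrt_sq (norm_nonneg S₀), habs2]
  have hsq : ‖((Real.sqrt N : ℝ) : ℂ)‖ = Real.sqrt N := by
    rw [Complex.norm_real, Real.norm_eq_abs, abs_of_nonneg (Real.sqrt_nonneg _)]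
  rw [norm_div, habs, hsq, div_self]
  exact ne_of_gt (Real.sqrt_pos.mpr (by exact_mod_cast hN))
end

section
/- Let N be a positive even integer, let ζ = exp(−πi/N), and let B be the N×N DFT matrix with entries B_{jk} = (1/√N)·ζ^{2jk}. Let F(π/2) be the N×N matrix with entries F_{jk} = (1/N)·ζ^{j²+k²} · Σ_{m=0}^{N−1} ζ^{m² + 2m(k−j)}. Then there exists a complex number σ with |σ| = 1, namely σ = (1/√N)·Σ_{m=0}^{N−1} ζ^{m²}, such that F(π/2) = σ·B as matrices; i.e., the fractional DFT at angle π/2 equals the ordinary DFT up to an overall unit-modulus phase. -/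
open Complex Finset

lemma shift_sum' (N : ℕ) (hN : 0 < N) (f : ℤ → ℂ)
    (hf : ∀ s t : ℤ, (N : ℤ) ∣ s - t → f s = f t) (c : ℤ) :
    ∑ m : Fin N, f ((m : ℤ) + c) = ∑ m : Fin N, f (m : ℤ) := by
  haveI : NeZero N := ⟨hN.ne'⟩
  set G : ZMod N → ℂ := fun x => f (x.val : ℤ) with hG
  have key : ∀ t : ℤ, f t = G ((t : ZMod N)) := by
    intro t
    apply hf
    have h := ZMod.val_intCast (n := N) t
    rw [h]
    exact ⟨t / N, by have := Int.mul_ediv_add_emod t N; linarith⟩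
  have e : Function.Bijective (fun m : Fin N => ((m : ℕ) : ZMod N)) := by
    rw [Fintype.bijective_iff_injective_and_card]
    constructor
    · intro a b hab
      have ha := ZMod.val_cast_of_lt a.isLt
      have hb := ZMod.val_cast_of_lt b.isLt
      apply Fin.ext
      rw [← ha, ← hb]
      exact congrArg ZMod.val hab
    · simp [ZMod.card]
  calc ∑ m : Fin N, f ((m : ℤ) + c)
      = ∑ m : Fin N, G (((m : ℕ) : ZMod N) + (c : ZMod N)) := by
        refine Finset.sum_congr rfl fun m _ => ?_
        rw [key]
        push_cast
        ring_nf
    _ = ∑ x : ZMod N, G (x + (c : ZMod N)) := (Fintype.sum_bijective _ e _ _ fun m => rfl)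
    _ = ∑ x : ZMod N, G x := Fintype.sum_equiv (Equiv.addRight (c : ZMod N)) _ _ fun x => rfl
    _ = ∑ m : Fin N, G ((m : ℕ) : ZMod N) := (Fintype.sum_bijective _ e _ _ fun m => rfl).symm
    _ = ∑ m : Fin N, f (m : ℤ) := by
        refine Finset.sum_congr rfl fun m _ => ?_
        rw [key ((m : ℕ) : ℤ)]
        norm_cast

section main
variable (N : ℕ) (hN : 0 < N) (hNeven : Even N) (ζ : ℂ)
  (hζ : ζ = Complex.exp (-Real.pi * Complex.I / N))

include hζ in
lemma zeta_ne : ζ ≠ 0 := by rw [hζ]; exact Complex.exp_ne_zero _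

include hζ hN in
lemma zeta_2N : ζ ^ ((2 * N : ℕ) : ℤ) = 1 := by
  have hNC : (N : ℂ) ≠ 0 := Nat.cast_ne_zero.mpr hN.ne'
  rw [zpow_natCast, hζ, ← Complex.exp_nat_mul]
  have : (↑(2 * N) : ℂ) * (-Real.pi * Complex.I / N) = -(2 * Real.pi * Complex.I) := by
    push_cast; field_simp
  rw [this, Complex.exp_neg, Complex.exp_two_pi_mul_I, inv_one]

include hζ hN hNeven in
lemma zeta_Nsq : ζ ^ ((N : ℤ) ^ 2) = 1 := by
  have hNC : (N : ℂ) ≠ 0 := Nat.cast_ne_zero.mpr hN.ne'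
  have h1 : ζ ^ (N : ℕ) = -1 := by
    rw [hζ, ← Complex.exp_nat_mul]
    have : (N : ℂ) * (-Real.pi * Complex.I / N) = -(Real.pi * Complex.I) := by
      field_simp
    rw [this, Complex.exp_neg, Complex.exp_pi_mul_I]
    norm_num
  have h2 : ζ ^ ((N : ℤ) ^ 2) = (ζ ^ (N : ℕ)) ^ (N : ℕ) := by
    have hcast : ((N : ℤ) ^ 2) = ((N * N : ℕ) : ℤ) := by push_cast; ring
    rw [hcast, zpow_natCast, pow_mul]
  rw [h2, h1, hNeven.neg_one_pow]

include hζ hN hNeven in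
lemma zeta_sq_periodic : ∀ s t : ℤ, (N : ℤ) ∣ s - t → ζ ^ (s ^ 2) = ζ ^ (t ^ 2) := by
  intro s t hst
  obtain ⟨k, hk⟩ := hst
  have hζ0 : ζ ≠ 0 := zeta_ne N ζ hζ
  have hs : s = t + N * k := by linarith
  have hexp : s ^ 2 = t ^ 2 + ((2 * N : ℕ) : ℤ) * (t * k) + (N : ℤ) ^ 2 * k ^ 2 := by
    subst hs; push_cast; ring
  rw [hexp, zpow_add₀ hζ0, zpow_add₀ hζ0, zpow_mul ζ ((2 * N : ℕ) : ℤ),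
    zpow_mul ζ ((N : ℤ) ^ 2), zeta_2N N hN ζ hζ, zeta_Nsq N hN hNeven ζ hζ,
    one_zpow, one_zpow, mul_one, mul_one]

end main



/-- For even positive `N`, `ζ = exp(−πi/N)`, DFT matrix `B_{jk} = ζ^{2jk}/√N`,
and fractional DFT `F(π/2)_{jk} = (1/N)·ζ^{j²+k²}·Σ_m ζ^{m²+2m(k−j)}`, there is a unit-modulus
phase `σ = (1/√N)·Σ_m ζ^{m²}` with `F(π/2) = σ·B`. -/
theorem frdft_half_pi_eq_phase_mul_dft (N : ℕ) (hN : 0 < N) (hNeven : Even N)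
    (ζ : ℂ) (hζ : ζ = Complex.exp (-Real.pi * Complex.I / N))
    (B F : Matrix (Fin N) (Fin N) ℂ)
    (hB : ∀ j k : Fin N, B j k = (1 / Real.sqrt N) * ζ ^ (2 * (j : ℕ) * (k : ℕ)))
    (hF : ∀ j k : Fin N, F j k =
      (1 / (N : ℂ)) * ζ ^ ((j : ℕ) ^ 2 + (k : ℕ) ^ 2) *
        ∑ m : Fin N,
          ζ ^ (((m : ℕ) : ℤ) ^ 2 +
            2 * ((m : ℕ) : ℤ) * (((k : ℕ) : ℤ) - ((j : ℕ) : ℤ)))) :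
    ∃ σ : ℂ, σ = (1 / Real.sqrt N) * ∑ m : Fin N, ζ ^ ((m : ℕ) ^ 2) ∧
      ‖σ‖ = 1 ∧ F = σ • B := by
  have hζ0 : ζ ≠ 0 := zeta_ne N ζ hζ
  have hper := zeta_sq_periodic N hN hNeven ζ hζ
  have hNC : (N : ℂ) ≠ 0 := Nat.cast_ne_zero.mpr hN.ne'
  have hsqrtpos : (0:ℝ) < Real.sqrt N := Real.sqrt_pos.mpr (by exact_mod_cast hN)
  haveI : NeZero N := ⟨hN.ne'⟩
  set S : ℂ := ∑ m : Fin N, ζ ^ ((m : ℕ) ^ 2) with hS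
  refine ⟨(1 / Real.sqrt N) * S, rfl, ?_, ?_⟩
  · -- |σ| = 1
    have hconjζ : (starRingEnd ℂ) ζ = ζ⁻¹ := by
      rw [hζ, ← Complex.exp_conj, ← Complex.exp_neg]
      congr 1
      simp [div_eq_mul_inv]
    have hconjS : (starRingEnd ℂ) S = ∑ n : Fin N, ζ ^ (-((n : ℕ) : ℤ) ^ 2) := by
      rw [hS, map_sum]
      refine Finset.sum_congr rfl fun n _ => ?_
      rw [← zpow_natCast ζ, map_zpow₀, hconjζ, inv_zpow, ← zpow_neg]
      norm_cast
    have hmulconj : S * (starRingEnd ℂ) S = (N : ℂ) := by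
      rw [hconjS, hS, Finset.sum_mul_sum]
      have hterm : ∀ m n : Fin N, ζ ^ ((m : ℕ) ^ 2) * ζ ^ (-((n : ℕ) : ℤ) ^ 2)
          = ζ ^ (((m : ℕ) : ℤ) ^ 2 - ((n : ℕ) : ℤ) ^ 2) := by
        intro m n
        have he : ((((m : ℕ) ^ 2 : ℕ)) : ℤ) + -((n : ℕ) : ℤ) ^ 2
            = (((m : ℕ) : ℤ)) ^ 2 - (((n : ℕ) : ℤ)) ^ 2 := by push_cast; ring
        rw [← zpow_natCast ζ, ← zpow_add₀ hζ0, he]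
      calc (∑ m : Fin N, ∑ n : Fin N, ζ ^ ((m : ℕ) ^ 2) * ζ ^ (-((n : ℕ) : ℤ) ^ 2))
          = ∑ n : Fin N, ∑ m : Fin N, ζ ^ (((m : ℕ) : ℤ) ^ 2 - ((n : ℕ) : ℤ) ^ 2) := by
            rw [Finset.sum_comm]
            exact Finset.sum_congr rfl fun n _ => Finset.sum_congr rfl fun m _ => hterm m n
        _ = ∑ n : Fin N, ∑ d : Fin N, ζ ^ ((((d : ℕ) : ℤ) + ((n : ℕ) : ℤ)) ^ 2 - ((n : ℕ) : ℤ) ^ 2) := by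
            refine Finset.sum_congr rfl fun n _ => ?_
            exact (shift_sum' N hN (fun t => ζ ^ (t ^ 2 - ((n : ℕ) : ℤ) ^ 2))
              (fun s t hst => by
                have h1 := hper s t hst
                simp only [zpow_sub₀ hζ0, h1]) ((n : ℕ) : ℤ)).symm
        _ = ∑ d : Fin N, ζ ^ (((d : ℕ) : ℤ) ^ 2) * ∑ n : Fin N, (ζ ^ (2 * (d : ℕ))) ^ (n : ℕ) := by
            rw [Finset.sum_comm]
            refine Finset.sum_congr rfl fun d _ => ?_
            rw [Finset.mul_sum]
            refine Finset.sum_congr rfl fun n _ => ?_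
            rw [← zpow_natCast (ζ ^ (2 * (d : ℕ))), ← zpow_natCast ζ (2 * (d : ℕ)), ← zpow_mul,
              ← zpow_add₀ hζ0]
            congr 1
            push_cast
            ring
        _ = (N : ℂ) := by
            rw [Finset.sum_eq_single (0 : Fin N)]
            · simp [Finset.card_univ]
            · intro d _ hd
              have hw1 : (ζ ^ (2 * (d : ℕ))) ≠ 1 := by
                have hprim : IsPrimitiveRoot (ζ ^ 2) N := by
                  have hpe := Complex.isPrimitiveRoot_exp N hN.ne'
                  have h2 : ζ ^ 2 = (Complex.exp (2 * Real.pi * Complex.I / N))⁻¹ := by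
                    rw [hζ, ← Complex.exp_nat_mul, ← Complex.exp_neg]
                    congr 1
                    push_cast
                    field_simp
                  rw [h2]
                  exact hpe.inv
                intro hcon
                rw [pow_mul] at hcon
                have hdvd := (hprim.pow_eq_one_iff_dvd (d : ℕ)).mp hcon
                have hlt := d.isLt
                have hne : (d : ℕ) ≠ 0 := fun h => hd (Fin.ext h)
                rcases hdvd with ⟨c, hc⟩
                rcases Nat.eq_zero_or_pos c with h0 | h0
                · subst h0
                  simp at hc
                  exact hd hc
                · nlinarith
              have hwN : (ζ ^ (2 * (d : ℕ))) ^ N = 1 := by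
                rw [← pow_mul, ← zpow_natCast ζ]
                have hh : (↑(2 * (d : ℕ) * N) : ℤ) = ((2 * N : ℕ) : ℤ) * (d : ℕ) := by push_cast; ring
                rw [hh, zpow_mul, zeta_2N N hN ζ hζ, one_zpow]
              have hz : ∑ n : Fin N, (ζ ^ (2 * (d : ℕ))) ^ (n : ℕ) = 0 := by
                rw [Fin.sum_univ_eq_sum_range (fun n => (ζ ^ (2 * (d : ℕ))) ^ n)]
                rw [geom_sum_eq hw1, hwN]
                simp
              rw [hz, mul_zero]
            · simp
    have hnormSq : Complex.normSq S = N := by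
      have h := hmulconj
      rw [Complex.mul_conj] at h
      exact_mod_cast h
    have habsS : ‖S‖ = Real.sqrt N := by
      rw [Complex.norm_def, hnormSq]
    rw [norm_mul, habsS, norm_div]
    simp only [norm_one]
    rw [Complex.norm_real, Real.norm_eq_abs, abs_of_pos hsqrtpos]
    field_simp
  · -- F = σ • B
    ext j k
    rw [Matrix.smul_apply, hF, hB, smul_eq_mul]
    have key : ζ ^ ((j : ℕ) ^ 2 + (k : ℕ) ^ 2) *
        (∑ m : Fin N, ζ ^ (((m : ℕ) : ℤ) ^ 2 +
            2 * ((m : ℕ) : ℤ) * (((k : ℕ) : ℤ) - ((j : ℕ) : ℤ))))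
        = ζ ^ (2 * (j : ℕ) * (k : ℕ)) * S := by
      have hterm : ∀ m : Fin N, ζ ^ ((j : ℕ) ^ 2 + (k : ℕ) ^ 2) *
          ζ ^ (((m : ℕ) : ℤ) ^ 2 + 2 * ((m : ℕ) : ℤ) * (((k : ℕ) : ℤ) - ((j : ℕ) : ℤ)))
          = ζ ^ ((2 * (j : ℕ) * (k : ℕ) : ℕ) : ℤ) *
            ζ ^ ((((m : ℕ) : ℤ) + (((k : ℕ) : ℤ) - ((j : ℕ) : ℤ))) ^ 2) := by
        intro m
        rw [← zpow_natCast ζ ((j : ℕ) ^ 2 + (k : ℕ) ^ 2), ← zpow_add₀ hζ0, ← zpow_add₀ hζ0]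
        congr 1
        push_cast
        ring
      rw [Finset.mul_sum]
      calc (∑ m : Fin N, ζ ^ ((j : ℕ) ^ 2 + (k : ℕ) ^ 2) *
            ζ ^ (((m : ℕ) : ℤ) ^ 2 + 2 * ((m : ℕ) : ℤ) * (((k : ℕ) : ℤ) - ((j : ℕ) : ℤ))))
          = ∑ m : Fin N, ζ ^ ((2 * (j : ℕ) * (k : ℕ) : ℕ) : ℤ) *
            ζ ^ ((((m : ℕ) : ℤ) + (((k : ℕ) : ℤ) - ((j : ℕ) : ℤ))) ^ 2) :=
            Finset.sum_congr rfl fun m _ => hterm m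
        _ = ζ ^ ((2 * (j : ℕ) * (k : ℕ) : ℕ) : ℤ) *
            ∑ m : Fin N, ζ ^ ((((m : ℕ) : ℤ) + (((k : ℕ) : ℤ) - ((j : ℕ) : ℤ))) ^ 2) := by
            rw [← Finset.mul_sum]
        _ = ζ ^ (2 * (j : ℕ) * (k : ℕ)) * S := by
            rw [shift_sum' N hN (fun t => ζ ^ (t ^ 2)) hper
              ((((k : ℕ) : ℤ) - ((j : ℕ) : ℤ)))]
            rw [zpow_natCast]
            congr 1
    have hsq : ((Real.sqrt N : ℂ)) * ((Real.sqrt N : ℂ)) = (N : ℂ) := by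
      rw [← Complex.ofReal_mul, Real.mul_self_sqrt (Nat.cast_nonneg N)]
      norm_cast
    have hs0 : ((Real.sqrt N : ℝ) : ℂ) ≠ 0 := by
      exact_mod_cast hsqrtpos.ne'
    rw [mul_assoc, key, ← hsq]
    field_simp
end
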